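/- Let {P̂,Ŷ} be a k-partition-with-sinks, let s* be a worst-case scenario for {P̂,Ŷ}, and let P_d be the dominant part of {P̂,Ŷ} under s*. Define the scenario s by w_i(s) = w_i(s*) for every vertex index i in P_d and w_i(s) = w_i⁻ for every vertex index i not in P_d. Then s is also a worst-case scenario for {P̂,Ŷ}, i.e., R({P̂,Ŷ}, s) = R_max({P̂,Ŷ}). -/
import Mathlib


/-- Maximum of `f` over a finite set of indices, with the empty maximum being `0`. -/
noncomputable def maxOver (S : Finset ℕ) (f : ℕ → ℝ) : ℝ := S.fold max 0 f

/-- Left evacuation time to sink `x t` of the subpath starting at `x l`, under weights `w`. -/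
noncomputable def thetaL (x : ℕ → ℝ) (τ : ℝ) (w : ℕ → ℝ) (l t : ℕ) : ℝ :=
  maxOver (Finset.Ico l t) (fun i => (x t - x i) * τ + ∑ j ∈ Finset.Icc l i, w j)

/-- Right evacuation time to sink `x t` of the subpath ending at `x r`, under weights `w`. -/
noncomputable def thetaR (x : ℕ → ℝ) (τ : ℝ) (w : ℕ → ℝ) (t r : ℕ) : ℝ :=
  maxOver (Finset.Ioc t r) (fun i => (x i - x t) * τ + ∑ j ∈ Finset.Icc i r, w j)

/-- 1-sink evacuation time `Θ¹([x_l,x_r], x_t, w)`. -/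
noncomputable def theta1 (x : ℕ → ℝ) (τ : ℝ) (w : ℕ → ℝ) (l t r : ℕ) : ℝ :=
  max (thetaL x τ w l t) (thetaR x τ w t r)

/-- A scenario assigns each vertex a weight within its bounds. -/
def IsScenario (n : ℕ) (wlo whi : ℕ → ℝ) (s : ℕ → ℝ) : Prop :=
  ∀ i, i ≤ n → wlo i ≤ s i ∧ s i ≤ whi i

/-- A `k`-partition-with-sinks of the vertex set `{0,…,n}` into `k` consecutive
nonempty blocks `{l p, …, r p}` (`p ∈ {1,…,k}`) with a sink `t p` in each block. -/
structure KPartSinks (n k : ℕ) where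
  l : ℕ → ℕ
  r : ℕ → ℕ
  t : ℕ → ℕ
  first : l 1 = 0
  last : r k = n
  consec : ∀ p, 1 ≤ p → p < k → l (p + 1) = r p + 1
  block_nonempty : ∀ p, 1 ≤ p → p ≤ k → l p ≤ r p
  sink_lb : ∀ p, 1 ≤ p → p ≤ k → l p ≤ t p
  sink_ub : ∀ p, 1 ≤ p → p ≤ k → t p ≤ r p

/-- `k`-sink evacuation time `Θᵏ(P, {P̂,Ŷ}, w)`. -/
noncomputable def thetaK {n k : ℕ} (x : ℕ → ℝ) (τ : ℝ) (PY : KPartSinks n k) (w : ℕ → ℝ) : ℝ :=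
  maxOver (Finset.Icc 1 k) (fun p => theta1 x τ w (PY.l p) (PY.t p) (PY.r p))

/-- Optimal `k`-sink evacuation time `Θᵏ_opt(P, w)`. -/
noncomputable def thetaOpt (x : ℕ → ℝ) (τ : ℝ) (n k : ℕ) (w : ℕ → ℝ) : ℝ :=
  sInf {v : ℝ | ∃ PY : KPartSinks n k, thetaK x τ PY w = v}

/-- Regret `R({P̂,Ŷ}, w)`. -/
noncomputable def regret {n k : ℕ} (x : ℕ → ℝ) (τ : ℝ) (PY : KPartSinks n k) (w : ℕ → ℝ) : ℝ :=
  thetaK x τ PY w - thetaOpt x τ n k w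

/-- Max-regret `R_max({P̂,Ŷ})`. -/
noncomputable def maxRegret {n k : ℕ} (x : ℕ → ℝ) (τ : ℝ) (wlo whi : ℕ → ℝ)
    (PY : KPartSinks n k) : ℝ :=
  sSup {v : ℝ | ∃ s : ℕ → ℝ, IsScenario n wlo whi s ∧ regret x τ PY s = v}

/-- A worst-case scenario: a scenario attaining the max-regret. -/
def IsWorstCase {n k : ℕ} (x : ℕ → ℝ) (τ : ℝ) (wlo whi : ℕ → ℝ) (PY : KPartSinks n k)
    (s : ℕ → ℝ) : Prop :=
  IsScenario n wlo whi s ∧ regret x τ PY s = maxRegret x τ wlo whi PY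

/-- `d` is the index of the dominant part of `{P̂,Ŷ}` under weights `w`:
the smallest index attaining `max_p Θ¹(P_p, y_p, w)`. -/
def IsDominant {n k : ℕ} (x : ℕ → ℝ) (τ : ℝ) (PY : KPartSinks n k) (w : ℕ → ℝ) (d : ℕ) : Prop :=
  1 ≤ d ∧ d ≤ k ∧
  (∀ p, 1 ≤ p → p ≤ k →
    theta1 x τ w (PY.l p) (PY.t p) (PY.r p) ≤ theta1 x τ w (PY.l d) (PY.t d) (PY.r d)) ∧
  (∀ p, 1 ≤ p → p < d →
    theta1 x τ w (PY.l p) (PY.t p) (PY.r p) < theta1 x τ w (PY.l d) (PY.t d) (PY.r d))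

/-- `R_{lr}(x_t)`: the max-regret of the subpath `[x_l,x_r]` as assumed dominant
part with sink `x_t`. -/
noncomputable def Rsink (x : ℕ → ℝ) (τ : ℝ) (wlo whi : ℕ → ℝ) (n k : ℕ) (l r t : ℕ) : ℝ :=
  sSup {v : ℝ | ∃ s : ℕ → ℝ, IsScenario n wlo whi s ∧
    theta1 x τ s l t r - thetaOpt x τ n k s = v}

/-- `R_{lr}`: the minimax regret of the subpath `[x_l,x_r]` as assumed dominant part. -/
noncomputable def Rlr (x : ℕ → ℝ) (τ : ℝ) (wlo whi : ℕ → ℝ) (n k : ℕ) (l r : ℕ) : ℝ :=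
  sInf {v : ℝ | ∃ t, l ≤ t ∧ t ≤ r ∧ Rsink x τ wlo whi n k l r t = v}

/-- A partition of `{0,…,i}` into `q` consecutive nonempty blocks `{l p, …, r p}`. -/
def IsQPartition (q i : ℕ) (l r : ℕ → ℕ) : Prop :=
  l 1 = 0 ∧ r q = i ∧ (∀ p, 1 ≤ p → p < q → l (p + 1) = r p + 1) ∧
  (∀ p, 1 ≤ p → p ≤ q → l p ≤ r p)

/-- `M(q, i)`: the minimum over partitions of `{0,…,i}` into `q` consecutive
nonempty blocks of `max_p R_{l_p r_p}`. -/
noncomputable def Mreg (x : ℕ → ℝ) (τ : ℝ) (wlo whi : ℕ → ℝ) (n k : ℕ) (q i : ℕ) : ℝ :=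
  sInf {v : ℝ | ∃ lf rf : ℕ → ℕ, IsQPartition q i lf rf ∧
    maxOver (Finset.Icc 1 q) (fun p => Rlr x τ wlo whi n k (lf p) (rf p)) = v}

/-- Left-dominant scenario on `{l,…,r}`. -/
def LeftDominant (wlo whi s : ℕ → ℝ) (l r : ℕ) : Prop :=
  ∃ i, l ≤ i ∧ i ≤ r + 1 ∧ (∀ j, l ≤ j → j < i → s j = whi j) ∧
    (∀ j, i ≤ j → j ≤ r → s j = wlo j)

/-- Right-dominant scenario on `{l,…,r}`. -/
def RightDominant (wlo whi s : ℕ → ℝ) (l r : ℕ) : Prop :=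
  ∃ i, l ≤ i ∧ i ≤ r + 1 ∧ (∀ j, l ≤ j → j < i → s j = wlo j) ∧
    (∀ j, i ≤ j → j ≤ r → s j = whi j)

lemma maxOver_nonneg (S : Finset ℕ) (f : ℕ → ℝ) : 0 ≤ maxOver S f :=
  (Finset.le_fold_max _).2 (Or.inl le_rfl)

lemma le_maxOver {S : Finset ℕ} {f : ℕ → ℝ} {i : ℕ} (h : i ∈ S) : f i ≤ maxOver S f :=
  (Finset.le_fold_max _).2 (Or.inr ⟨i, h, le_rfl⟩)

lemma maxOver_le {S : Finset ℕ} {f : ℕ → ℝ} {b : ℝ} (hb : 0 ≤ b)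
    (h : ∀ i ∈ S, f i ≤ b) : maxOver S f ≤ b :=
  (Finset.fold_max_le _).2 ⟨hb, h⟩

lemma maxOver_mono {S : Finset ℕ} {f g : ℕ → ℝ} (h : ∀ i ∈ S, f i ≤ g i) :
    maxOver S f ≤ maxOver S g :=
  maxOver_le (maxOver_nonneg S g) fun i hi => (h i hi).trans (le_maxOver hi)

lemma maxOver_congr {S : Finset ℕ} {f g : ℕ → ℝ} (h : ∀ i ∈ S, f i = g i) :
    maxOver S f = maxOver S g :=
  Finset.fold_congr h

lemma theta1_nonneg (x : ℕ → ℝ) (τ : ℝ) (w : ℕ → ℝ) (l t r : ℕ) :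
    0 ≤ theta1 x τ w l t r :=
  le_trans (maxOver_nonneg _ _) (le_max_left _ _)

lemma theta1_mono (x : ℕ → ℝ) (τ : ℝ) {w w' : ℕ → ℝ} {l t r : ℕ}
    (hw : ∀ j, l ≤ j → j ≤ r → w j ≤ w' j) (hlt : l ≤ t) (htr : t ≤ r) :
    theta1 x τ w l t r ≤ theta1 x τ w' l t r := by
  apply max_le_max
  · apply maxOver_mono
    intro i hi
    rw [Finset.mem_Ico] at hi
    have : ∀ j ∈ Finset.Icc l i, w j ≤ w' j := by
      intro j hj
      rw [Finset.mem_Icc] at hj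
      exact hw j hj.1 (le_trans hj.2 (le_trans (le_of_lt hi.2) htr))
    linarith [Finset.sum_le_sum this]
  · apply maxOver_mono
    intro i hi
    rw [Finset.mem_Ioc] at hi
    have : ∀ j ∈ Finset.Icc i r, w j ≤ w' j := by
      intro j hj
      rw [Finset.mem_Icc] at hj
      exact hw j (le_trans (le_trans hlt (le_of_lt hi.1)) hj.1) hj.2
    linarith [Finset.sum_le_sum this]

lemma theta1_congr (x : ℕ → ℝ) (τ : ℝ) {w w' : ℕ → ℝ} {l t r : ℕ}
    (hw : ∀ j, l ≤ j → j ≤ r → w j = w' j) (hlt : l ≤ t) (htr : t ≤ r) :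
    theta1 x τ w l t r = theta1 x τ w' l t r :=
  le_antisymm (theta1_mono x τ (fun j h1 h2 => (hw j h1 h2).le) hlt htr)
    (theta1_mono x τ (fun j h1 h2 => (hw j h1 h2).ge) hlt htr)

lemma r_le_n {n k : ℕ} (PY : KPartSinks n k) :
    ∀ p, 1 ≤ p → p ≤ k → PY.r p ≤ n := by
  have key : ∀ m p, 1 ≤ p → p + m ≤ k → PY.r p ≤ PY.r (p + m) := by
    intro m
    induction m with
    | zero => intro p _ _; exact le_rfl
    | succ m ih =>
      intro p hp hpk
      have h1 : PY.r p ≤ PY.r (p + m) := ih p hp (by omega)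
      have h2 : PY.l (p + m + 1) = PY.r (p + m) + 1 := PY.consec _ (by omega) (by omega)
      have h3 : PY.l (p + m + 1) ≤ PY.r (p + m + 1) := PY.block_nonempty _ (by omega) (by omega)
      show PY.r p ≤ PY.r (p + m + 1)
      omega
  intro p hp hpk
  have := key (k - p) p hp (by omega)
  have hrk := PY.last
  have : PY.r p ≤ PY.r k := by
    have hpk' : p + (k - p) = k := by omega
    rwa [hpk'] at this
  omega

lemma thetaK_mono {n k : ℕ} (x : ℕ → ℝ) (τ : ℝ) (PY : KPartSinks n k) {w w' : ℕ → ℝ}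
    (hw : ∀ j, j ≤ n → w j ≤ w' j) : thetaK x τ PY w ≤ thetaK x τ PY w' := by
  apply maxOver_mono
  intro p hp
  rw [Finset.mem_Icc] at hp
  exact theta1_mono x τ
    (fun j _ hj => hw j (le_trans hj (r_le_n PY p hp.1 hp.2)))
    (PY.sink_lb p hp.1 hp.2) (PY.sink_ub p hp.1 hp.2)

lemma thetaK_nonneg {n k : ℕ} (x : ℕ → ℝ) (τ : ℝ) (PY : KPartSinks n k) (w : ℕ → ℝ) :
    0 ≤ thetaK x τ PY w := maxOver_nonneg _ _

lemma thetaOpt_nonneg (x : ℕ → ℝ) (τ : ℝ) (n k : ℕ) (w : ℕ → ℝ) :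
    0 ≤ thetaOpt x τ n k w := by
  apply Real.sInf_nonneg
  rintro v ⟨PY, rfl⟩
  exact thetaK_nonneg x τ PY w

lemma thetaOpt_le {n k : ℕ} (x : ℕ → ℝ) (τ : ℝ) (PY : KPartSinks n k) (w : ℕ → ℝ) :
    thetaOpt x τ n k w ≤ thetaK x τ PY w := by
  apply csInf_le
  · exact ⟨0, by rintro v ⟨PY', rfl⟩; exact thetaK_nonneg x τ PY' w⟩
  · exact ⟨PY, rfl⟩

lemma thetaOpt_mono {n k : ℕ} (x : ℕ → ℝ) (τ : ℝ) (PY₀ : KPartSinks n k) {w w' : ℕ → ℝ}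
    (hw : ∀ j, j ≤ n → w j ≤ w' j) : thetaOpt x τ n k w ≤ thetaOpt x τ n k w' := by
  refine le_csInf ⟨thetaK x τ PY₀ w', PY₀, rfl⟩ ?_
  rintro v ⟨PY', rfl⟩
  exact le_trans (thetaOpt_le x τ PY' w) (thetaK_mono x τ PY' hw)

/-- modifying a worst-case scenario to take the lower weight bound
outside the dominant part keeps it a worst-case scenario. -/
theorem stmt_0 (n k : ℕ) (x : ℕ → ℝ) (τ : ℝ) (wlo whi : ℕ → ℝ)
    (hx : ∀ i, i < n → x i < x (i + 1)) (hτ : 0 < τ)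
    (hw : ∀ i, i ≤ n → 0 < wlo i ∧ wlo i ≤ whi i) (hk : 1 ≤ k)
    (PY : KPartSinks n k) (sstar : ℕ → ℝ)
    (hworst : IsWorstCase x τ wlo whi PY sstar)
    (d : ℕ) (hd : IsDominant x τ PY sstar d)
    (s : ℕ → ℝ)
    (hin : ∀ i, PY.l d ≤ i → i ≤ PY.r d → s i = sstar i)
    (hout : ∀ i, ¬ (PY.l d ≤ i ∧ i ≤ PY.r d) → s i = wlo i) :
    IsWorstCase x τ wlo whi PY s := by
  obtain ⟨hsc, hreg⟩ := hworst
  obtain ⟨hd1, hdk, hdmax, _⟩ := hd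
  have hld : PY.l d ≤ PY.t d := PY.sink_lb d hd1 hdk
  have hrd : PY.t d ≤ PY.r d := PY.sink_ub d hd1 hdk
  -- s is a scenario
  have hsS : IsScenario n wlo whi s := by
    intro i hi
    by_cases h : PY.l d ≤ i ∧ i ≤ PY.r d
    · rw [hin i h.1 h.2]; exact hsc i hi
    · rw [hout i h]; exact ⟨le_rfl, (hw i hi).2⟩
  refine ⟨hsS, ?_⟩
  -- s ≤ sstar on indices ≤ n
  have hle : ∀ j, j ≤ n → s j ≤ sstar j := by
    intro j hj
    by_cases h : PY.l d ≤ j ∧ j ≤ PY.r d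
    · rw [hin j h.1 h.2]
    · rw [hout j h]; exact (hsc j hj).1
  -- theta1 of block d agrees for s and sstar
  have htheta1 : theta1 x τ s (PY.l d) (PY.t d) (PY.r d)
      = theta1 x τ sstar (PY.l d) (PY.t d) (PY.r d) :=
    theta1_congr x τ (fun j h1 h2 => hin j h1 h2) hld hrd
  -- thetaK sstar equals theta1 of block d under sstar
  have hKstar : thetaK x τ PY sstar = theta1 x τ sstar (PY.l d) (PY.t d) (PY.r d) := by
    apply le_antisymm
    · apply maxOver_le (theta1_nonneg x τ sstar _ _ _)
      intro p hp
      rw [Finset.mem_Icc] at hp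
      exact hdmax p hp.1 hp.2
    · exact le_maxOver (f := fun p => theta1 x τ sstar (PY.l p) (PY.t p) (PY.r p))
        (Finset.mem_Icc.2 ⟨hd1, hdk⟩)
  -- thetaK s ≥ thetaK sstar
  have hKge : thetaK x τ PY sstar ≤ thetaK x τ PY s := by
    rw [hKstar, ← htheta1]
    exact le_maxOver (f := fun p => theta1 x τ s (PY.l p) (PY.t p) (PY.r p))
      (Finset.mem_Icc.2 ⟨hd1, hdk⟩)
  -- thetaOpt s ≤ thetaOpt sstar
  have hOle : thetaOpt x τ n k s ≤ thetaOpt x τ n k sstar := thetaOpt_mono x τ PY hle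
  -- regret s ≥ regret sstar
  have hrge : regret x τ PY sstar ≤ regret x τ PY s := by
    unfold regret
    linarith
  -- regret s ≤ maxRegret
  have hbdd : BddAbove {v : ℝ | ∃ s' : ℕ → ℝ, IsScenario n wlo whi s' ∧ regret x τ PY s' = v} := by
    refine ⟨thetaK x τ PY whi, ?_⟩
    rintro v ⟨s', hs', rfl⟩
    have h1 : thetaK x τ PY s' ≤ thetaK x τ PY whi :=
      thetaK_mono x τ PY (fun j hj => (hs' j hj).2)
    have h2 : 0 ≤ thetaOpt x τ n k s' := thetaOpt_nonneg x τ n k s'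
    unfold regret
    linarith
  have hrle : regret x τ PY s ≤ maxRegret x τ wlo whi PY :=
    le_csSup hbdd ⟨s, hsS, rfl⟩
  have := hreg
  apply le_antisymm hrle
  rw [← hreg]
  exact hrge
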